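/- For all non-negative integers n, q, t, p with q ≥ 1 and p < n, and every sequence x ∈ A_q^n, there exists an injection from B_{t,0,p}(0^n) into B_{t,0,p}(x); consequently |B_{t,0,p}(x)| ≥ Σ_{i=0}^{t+p} C(n+t, i) (q-1)^i. -/

import Mathlib

/-- The subsequence of `x` indexed by the finite set `S` of size `m`,
entries taken in increasing index order. -/
def subseqOf {q n m : ℕ} (x : Fin n → Fin q) (S : Finset (Fin n)) (h : S.card = m) :
    Fin m → Fin q :=
  fun i => x ((S.orderIsoOfFin h i : Fin n))

/-- The insertion/deletion/substitution ball of `x ∈ A_q^n`: all sequences `z` of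
length `m` such that some subsequence of `x` of length `n - s` is within Hamming
distance `p` of some subsequence of `z` of the same length.  For the `t`-insertion
`s`-deletion `p`-substitution ball `B_{t,s,p}(x)`, take `m = n + t - s`. -/
def idsBall (q s p : ℕ) {n m : ℕ} (x : Fin n → Fin q) : Set (Fin m → Fin q) :=
  { z | ∃ (S1 : Finset (Fin n)) (S2 : Finset (Fin m))
      (h1 : S1.card = n - s) (h2 : S2.card = n - s),
      hammingDist (subseqOf x S1 h1) (subseqOf z S2 h2) ≤ p }

/-!
Read `y ∈ B_{t,0,p}(x)` as: some strictly monotone `g : Fin n → Fin (n + t)` has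
`d(x, y ∘ g) ≤ p`. Then every `y ∈ B_{t,0,p}(0^n)` differs from `0^{n+t}` in at most `t + p`
places, so `|B_{t,0,p}(0^n)| ≤ V(n + t, t + p)`, the volume of a Hamming ball. Conversely
`|B_{t,0,p}(x)| ≥ V(n + t, t + p)` for every `x`, by induction on the length, sorting `y` by its
first letter `a`: for `a = x₀` the words contain `a · B_{t,0,p}(tail x)`, and for each of the
`q - 1` other letters they contain `a · B_{t-1,0,p}(x)` (`a` is inserted). Pascal's rule
`V(N + 1, r + 1) = V(N, r + 1) + (q - 1) V(N, r)` closes the induction, and comparing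
cardinalities gives the injection.
-/

open Finset

variable {α : Type*}

def insSubBall [DecidableEq α] (p : ℕ) {n m : ℕ} (x : Fin n → α) : Set (Fin m → α) :=
  {y | ∃ g : Fin n → Fin m, StrictMono g ∧ hammingDist x (y ∘ g) ≤ p}

section Subseq

variable {q n m : ℕ}

lemma subseqOf_eq_comp (x : Fin n → Fin q) (S : Finset (Fin n)) (h : S.card = m) :
    subseqOf x S h = x ∘ S.orderEmbOfFin h := by
  ext i; simp [subseqOf]

lemma subseqOf_univ (x : Fin n → Fin q) (h : (univ : Finset (Fin n)).card = n) :
    subseqOf x univ h = x := by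
  rw [subseqOf_eq_comp, ← orderEmbOfFin_unique h (fun _ => mem_univ _) strictMono_id]
  rfl

lemma subseqOf_map (z : Fin m → Fin q) {g : Fin n → Fin m} (hg : StrictMono g)
    (h : (univ.map ⟨g, hg.injective⟩).card = n) :
    subseqOf z (univ.map ⟨g, hg.injective⟩) h = z ∘ g := by
  rw [subseqOf_eq_comp, ← orderEmbOfFin_unique h (fun i => mem_map_of_mem _ (mem_univ i)) hg]
  rfl

end Subseq

lemma idsBall_zero_eq_insSubBall (q p : ℕ) {n m : ℕ} (x : Fin n → Fin q) :
    (idsBall q 0 p x : Set (Fin m → Fin q)) = insSubBall p x := by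
  ext z
  constructor
  · rintro ⟨S1, S2, h1, h2, hd⟩
    obtain rfl : S1 = univ := eq_univ_of_card _ (by simpa using h1)
    rw [subseqOf_univ, subseqOf_eq_comp] at hd
    exact ⟨_, (S2.orderEmbOfFin h2).strictMono, hd⟩
  · rintro ⟨g, hg, hd⟩
    refine ⟨univ, univ.map ⟨g, hg.injective⟩, by simp, by simp, ?_⟩
    rwa [subseqOf_univ, subseqOf_map _ hg]

section Ball

variable [DecidableEq α] {p n m : ℕ}

lemma hammingDist_cons_right (x : Fin (n + 1) → α) (a : α) (y : Fin n → α) :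
    hammingDist x (Fin.cons a y) = hammingDist (Fin.tail x) y + if x 0 = a then 0 else 1 := by
  conv_lhs => rw [← Fin.cons_self_tail x]
  simp only [hammingDist, card_filter, Fin.sum_univ_succ, Fin.cons_zero, Fin.cons_succ]
  by_cases h : x 0 = a <;> simp [h, add_comm]

lemma insSubBall_fin_zero_eq_univ (x : Fin 0 → α) :
    (insSubBall p x : Set (Fin m → α)) = Set.univ :=
  Set.eq_univ_of_forall fun _ => ⟨finZeroElim, Subsingleton.strictMono _,
    (hammingDist_eq_zero.2 (Subsingleton.elim _ _)).trans_le p.zero_le⟩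

lemma setOf_hammingDist_le_subset_insSubBall (x : Fin n → α) :
    {y | hammingDist x y ≤ p} ⊆ insSubBall p x :=
  fun _ hy => ⟨id, strictMono_id, hy⟩

lemma cons_mem_insSubBall (a : α) {x : Fin n → α} {y : Fin m → α}
    (h : y ∈ insSubBall p x) :
    Fin.cons a y ∈ insSubBall p x := by
  obtain ⟨g, hg, hd⟩ := h
  exact ⟨Fin.succ ∘ g, Fin.strictMono_succ.comp hg, by simpa [Function.comp_def] using hd⟩

lemma cons_head_mem_insSubBall {x : Fin (n + 1) → α} {y : Fin m → α}
    (h : y ∈ insSubBall p (Fin.tail x)) : Fin.cons (x 0) y ∈ insSubBall p x := by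
  obtain ⟨g, hg, hd⟩ := h
  refine ⟨Fin.cons 0 (Fin.succ ∘ g),
    Fin.strictMono_cons.2 ⟨fun _ => Fin.succ_pos _, Fin.strictMono_succ.comp hg⟩, ?_⟩
  rw [Fin.comp_cons, hammingDist_cons_right]
  simpa [Function.comp_def] using hd

end Ball

lemma hammingDist_le_hammingDist_comp_add {ι κ β : Type*} [Fintype ι] [Fintype κ]
    [DecidableEq κ] [DecidableEq β] (g : ι ↪ κ) (u v : κ → β) :
    hammingDist u v ≤ hammingDist (u ∘ g) (v ∘ g) + (Fintype.card κ - Fintype.card ι) := by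
  have hsub : ({j | u j ≠ v j} : Finset κ) ⊆
      ({i | u (g i) ≠ v (g i)} : Finset ι).map g ∪ (univ.map g)ᶜ := by
    intro j hj
    by_cases hg : j ∈ univ.map g
    · obtain ⟨i, -, rfl⟩ := mem_map.1 hg
      exact mem_union_left _ (mem_map_of_mem _ (by simpa using hj))
    · exact mem_union_right _ (mem_compl.2 hg)
  calc hammingDist u v ≤ #(({i | u (g i) ≠ v (g i)} : Finset ι).map g ∪ (univ.map g)ᶜ) :=
        card_le_card hsub
    _ ≤ _ := (card_union_le _ _).trans_eq (by simp [hammingDist, card_compl])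

lemma hammingDist_const_le_of_mem_insSubBall [DecidableEq α] {p n t : ℕ} (c : α)
    {z : Fin (n + t) → α} (hz : z ∈ insSubBall p (fun _ : Fin n => c)) :
    hammingDist (fun _ => c) z ≤ t + p := by
  obtain ⟨g, hg, hd⟩ := hz
  have := hammingDist_le_hammingDist_comp_add ⟨g, hg.injective⟩ (fun _ => c) z
  simp only [Fintype.card_fin, add_tsub_cancel_left] at this
  change hammingDist (fun _ => c) z ≤ hammingDist (fun _ => c) (z ∘ g) + t at this
  omega

/-- Number of words of `A^N`, `|A| = k + 1`, at Hamming distance `< R` (strictly) from a fixed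
word. -/
def hammingVolume (k N R : ℕ) : ℕ := ∑ i ∈ range R, N.choose i * k ^ i

lemma hammingVolume_zero_left (k R : ℕ) : hammingVolume k 0 (R + 1) = 1 := by
  simp [hammingVolume, sum_range_succ', Nat.choose_eq_zero_of_lt]

lemma hammingVolume_succ_succ (k N R : ℕ) :
    hammingVolume k (N + 1) (R + 1) = hammingVolume k N (R + 1) + k * hammingVolume k N R := by
  have hshift (i : ℕ) : N.choose i * k ^ (i + 1) = k * (N.choose i * k ^ i) := by ring
  simp only [hammingVolume, sum_range_succ' _ R, Nat.choose_succ_succ', add_mul, sum_add_distrib,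
    hshift, ← mul_sum, Nat.choose_zero_right]
  ring

lemma ncard_fin_succ_eq_sum_cons {m : ℕ} [Fintype α] (P : (Fin (m + 1) → α) → Prop) :
    {y | P y}.ncard = ∑ a, {y : Fin m → α | P (Fin.cons a y)}.ncard := by
  refine (Nat.card_congr ?_).trans Nat.card_sigma
  exact
    { toFun := fun y => ⟨y.1 0, Fin.tail y.1, by
        simpa only [Set.mem_ofPred_eq, Fin.cons_self_tail] using y.2⟩
      invFun := fun s => ⟨Fin.cons s.1 s.2.1, s.2.2⟩
      left_inv := fun y => Subtype.ext (Fin.cons_self_tail y.1)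
      right_inv := fun _ => rfl }

lemma ncard_setOf_hammingDist_lt [Fintype α] [DecidableEq α] {N : ℕ} (c : Fin N → α)
    (R : ℕ) :
    {y | hammingDist c y < R}.ncard = hammingVolume (Fintype.card α - 1) N R := by
  induction N generalizing R with
  | zero =>
    cases R with
    | zero => simp [hammingVolume]
    | succ R =>
      have (y : Fin 0 → α) : hammingDist c y = 0 := hammingDist_eq_zero.2 (Subsingleton.elim _ _)
      simp [this, hammingVolume_zero_left]
  | succ N ih =>
    cases R with
    | zero => simp [hammingVolume]
    | succ R =>
      rw [ncard_fin_succ_eq_sum_cons, ← add_sum_erase _ _ (mem_univ (c 0)),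
        hammingVolume_succ_succ]
      have hother : ∀ a ∈ univ.erase (c 0),
          {y | hammingDist c (Fin.cons a y) < R + 1}.ncard =
            hammingVolume (Fintype.card α - 1) N R := by
        intro a ha
        simp only [hammingDist_cons_right, if_neg (ne_of_mem_erase ha).symm,
          add_lt_add_iff_right]
        exact ih _ R
      rw [sum_congr rfl hother, sum_const, card_erase_of_mem (mem_univ _), card_univ,
        smul_eq_mul]
      simp only [hammingDist_cons_right, if_pos, add_zero, ih]

section Count

variable [Fintype α] [DecidableEq α]

lemma hammingVolume_le_ncard_insSubBall_fin_zero [Nonempty α] (p : ℕ) {m R : ℕ}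
    (x : Fin 0 → α) :
    hammingVolume (Fintype.card α - 1) m R ≤ (insSubBall p x : Set (Fin m → α)).ncard := by
  rw [insSubBall_fin_zero_eq_univ, ← ncard_setOf_hammingDist_lt (fun _ => Classical.arbitrary α)]
  exact Set.ncard_le_ncard (Set.subset_univ _)

theorem hammingVolume_le_ncard_insSubBall [Nonempty α] (p : ℕ) {n t m : ℕ} (hm : n + t = m)
    (x : Fin n → α) :
    hammingVolume (Fintype.card α - 1) m (t + p + 1) ≤
      (insSubBall p x : Set (Fin m → α)).ncard := by
  induction m generalizing n t with
  | zero =>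
    obtain rfl : n = 0 := by omega
    exact hammingVolume_le_ncard_insSubBall_fin_zero p x
  | succ M ih =>
    match n, t with
    | 0, t => exact hammingVolume_le_ncard_insSubBall_fin_zero p x
    | n + 1, 0 =>
      obtain rfl : n = M := by omega
      rw [← ncard_setOf_hammingDist_lt x]
      exact Set.ncard_le_ncard fun y hy =>
        setOf_hammingDist_le_subset_insSubBall x (Nat.lt_succ_iff.1 (by simpa using hy))
    | n + 1, t + 1 =>
      rw [← Set.ofPred_mem_eq (s := insSubBall p x), ncard_fin_succ_eq_sum_cons,
        ← add_sum_erase _ _ (mem_univ (x 0)), hammingVolume_succ_succ]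
      refine add_le_add ((ih (by omega) (Fin.tail x)).trans
        (Set.ncard_le_ncard fun y hy => cons_head_mem_insSubBall hy)) ?_
      rw [Nat.add_right_comm t 1 p]
      calc (Fintype.card α - 1) * hammingVolume (Fintype.card α - 1) M (t + p + 1)
          = ∑ _a ∈ univ.erase (x 0), hammingVolume (Fintype.card α - 1) M (t + p + 1) := by
            rw [sum_const, card_erase_of_mem (mem_univ _), card_univ, smul_eq_mul]
        _ ≤ _ := sum_le_sum fun a _ => (ih (by omega) x).trans
            (Set.ncard_le_ncard fun y hy => cons_mem_insSubBall a hy)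

theorem ncard_insSubBall_const_le (c : α) (p n t : ℕ) :
    (insSubBall p (fun _ : Fin n => c) : Set (Fin (n + t) → α)).ncard ≤
      hammingVolume (Fintype.card α - 1) (n + t) (t + p + 1) := by
  rw [← ncard_setOf_hammingDist_lt (fun _ => c)]
  exact Set.ncard_le_ncard fun z hz =>
    Nat.lt_succ_of_le (hammingDist_const_le_of_mem_insSubBall c hz)

end Count

theorem idsBall_ins_sub_injection_general (n q t p : ℕ) (hq : 1 ≤ q)
    (x : Fin n → Fin q) :
    (∃ f : (idsBall q 0 p (fun _ : Fin n => (⟨0, hq⟩ : Fin q)) :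
              Set (Fin (n + t) → Fin q)) →
            (idsBall q 0 p x : Set (Fin (n + t) → Fin q)),
        Function.Injective f) ∧
      (idsBall q 0 p x : Set (Fin (n + t) → Fin q)).ncard ≥
        ∑ i ∈ Finset.range (t + p + 1), (n + t).choose i * (q - 1) ^ i := by
  have : Nonempty (Fin q) := ⟨⟨0, hq⟩⟩
  have hlower := hammingVolume_le_ncard_insSubBall p (rfl : n + t = _) x
  have hupper := ncard_insSubBall_const_le (⟨0, hq⟩ : Fin q) p n t
  rw [Fintype.card_fin] at hlower hupper
  rw [idsBall_zero_eq_insSubBall, idsBall_zero_eq_insSubBall]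
  refine ⟨?_, hlower⟩
  classical
  obtain ⟨f⟩ := Function.Embedding.nonempty_of_card_le (by
    simpa only [Set.ncard_eq_toFinset_card', Set.toFinset_card] using hupper.trans hlower)
  exact ⟨f, f.injective⟩

/-- an injection from `B_{t,0,p}(0^n)` into `B_{t,0,p}(x)`,
and the resulting lower bound on the ball size. -/
theorem idsBall_ins_sub_injection (n q t p : ℕ) (hq : 1 ≤ q) (hpn : p < n)
    (x : Fin n → Fin q) :
    (∃ f : (idsBall q 0 p (fun _ : Fin n => (⟨0, hq⟩ : Fin q)) :
              Set (Fin (n + t) → Fin q)) →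
            (idsBall q 0 p x : Set (Fin (n + t) → Fin q)),
        Function.Injective f) ∧
      (idsBall q 0 p x : Set (Fin (n + t) → Fin q)).ncard ≥
        ∑ i ∈ Finset.range (t + p + 1), (n + t).choose i * (q - 1) ^ i :=
  idsBall_ins_sub_injection_general n q t p hq x
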